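/- arXiv:2008.01495 — 3 statements merged into one kernel-verified Lean document; each statement's English description precedes it below -/
import Mathlib

section
/- Let W̄_j ⊆ W_j ⊆ W be subsets of the row index set and X_j ⊆ X a subset of the external column index set, and let L = |W|. Then: (i) rank(T_{W̄_j, X_j}) = |W̄_j| if and only if F(W̄_j, X_j) has full row rank L; and (ii) rank(T_{W_j, X_j}) = rank(T_{W̄_j, X_j}) + rank(T_{(W_j ∖ W̄_j), X_j}) if and only if rank(F(W_j, X_j)) = rank(F(W̄_j, X_j)) + rank(F(W_j ∖ W̄_j, X_j)) − L. -/
/-!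
Left multiplication by the invertible matrix `-(I - G)⁻¹` turns `F(A, X')` into
`[E | -T_{W, X'}]`, where `E` consists of the unit columns `e_i`, `i ∉ A`. Clearing the rows
outside `A` with these unit columns leaves the block `T_{A, X'}`, so
`rank F(A, X') = |W ∖ A| + rank T_{A, X'}`. With `|W ∖ A| = L - |A|`, both equivalences are
then linear arithmetic.
-/

/-- The submatrix `T_{A, X'}` of `T = (I - G)⁻¹ * X̄` with rows indexed by the
subset `A ⊆ W` and columns indexed by the subset `X' ⊆ X`. -/
noncomputable def Tsub {F : Type*} [Field F] {W X : Type*} [Fintype W] [Fintype X]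
    [DecidableEq W]
    (G : Matrix W W F) (Xb : Matrix W X F) (A : Finset W) (X' : Finset X) :
    Matrix ↥A ↥X' F :=
  ((1 - G)⁻¹ * Xb).submatrix (fun i : ↥A => (i : W)) (fun j : ↥X' => (j : X))

/-- The matrix `F(A, X')` whose left block consists of the columns of `G - I`
indexed by `W ∖ A` and whose right block consists of the columns of `X̄`
indexed by `X'`. -/
noncomputable def Fmat {F : Type*} [Field F] {W X : Type*} [Fintype W] [Fintype X]
    [DecidableEq W]
    (G : Matrix W W F) (Xb : Matrix W X F) (A : Finset W) (X' : Finset X) :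
    Matrix W (↥(Aᶜ) ⊕ ↥X') F :=
  Matrix.fromCols ((G - 1).submatrix id (fun j : ↥(Aᶜ) => (j : W)))
    (Xb.submatrix id (fun j : ↥X' => (j : X)))

open Matrix Module

theorem Submodule.finrank_prod {R M N : Type*} [DivisionRing R] [AddCommGroup M]
    [AddCommGroup N] [Module R M] [Module R N] (p : Submodule R M) (q : Submodule R N)
    [FiniteDimensional R p] [FiniteDimensional R q] :
    finrank R (p.prod q) = finrank R p + finrank R q := by
  rw [← p.range_subtype, ← q.range_subtype, ← LinearMap.range_prodMap,
    LinearMap.finrank_range_of_inj (p.injective_subtype.prodMap q.injective_subtype),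
    Module.finrank_prod, p.range_subtype, q.range_subtype]

namespace Matrix

variable {R : Type*} [Field R] {m₁ m₂ n₁ n₂ : Type*} [Fintype n₁] [Fintype n₂]

theorem rank_fromBlocks_zero_zero (A : Matrix m₁ n₁ R) (D : Matrix m₂ n₂ R) :
    (fromBlocks A 0 0 D).rank = A.rank + D.rank := by
  have hmulVecLin : (fromBlocks A 0 0 D).mulVecLin
      = ((LinearEquiv.sumArrowLequivProdArrow m₁ m₂ R R).symm :
            ((m₁ → R) × (m₂ → R)) →ₗ[R] (m₁ ⊕ m₂ → R)) ∘ₗ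
        (A.mulVecLin.prodMap D.mulVecLin) ∘ₗ
        ((LinearEquiv.sumArrowLequivProdArrow n₁ n₂ R R) :
            (n₁ ⊕ n₂ → R) →ₗ[R] ((n₁ → R) × (n₂ → R))) := by
    ext x (i | i) <;>
      simp [fromBlocks_mulVec, LinearEquiv.sumArrowLequivProdArrow, Equiv.sumArrowEquivProdArrow]
  rw [rank, hmulVecLin, LinearMap.range_comp, LinearMap.range_comp_of_range_eq_top _
      (LinearEquiv.range _), LinearEquiv.finrank_map_eq, LinearMap.range_prodMap,
    Submodule.finrank_prod]
  rfl

theorem rank_fromBlocks_zero₂₁_of_isUnit_det [Fintype m₁] [DecidableEq m₁]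
    (A : Matrix m₁ m₁ R) (B : Matrix m₁ n₂ R) (D : Matrix m₂ n₂ R) (hA : IsUnit A.det) :
    (fromBlocks A B 0 D).rank = Fintype.card m₁ + D.rank := by
  classical
  have hfactor : fromBlocks A B 0 D = fromBlocks A 0 0 D *
      (fromBlocks 1 (A⁻¹ * B) 0 1 : Matrix (m₁ ⊕ n₂) (m₁ ⊕ n₂) R) := by
    simp [fromBlocks_multiply, ← Matrix.mul_assoc, mul_nonsing_inv _ hA]
  rw [hfactor, rank_mul_eq_left_of_isUnit_det _ _ (by simp),
    rank_fromBlocks_zero_zero, rank_of_isUnit _ ((isUnit_iff_isUnit_det A).mpr hA)]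

theorem rank_neg {m n : Type*} [Fintype n] (M : Matrix m n R) : (-M).rank = M.rank := by
  classical
  simpa using rank_mul_eq_left_of_isUnit_det (-1) M (by simp [det_neg])

theorem rank_fromCols_one_submatrix_compl {m n : Type*} [Fintype m] [DecidableEq m] [Fintype n]
    (A : Finset m) (M : Matrix m n R) :
    (fromCols ((1 : Matrix m m R).submatrix id ((↑) : ↥Aᶜ → m)) M).rank
      = Aᶜ.card + (M.submatrix ((↑) : ↥A → m) id).rank := by
  let e : ↥Aᶜ ⊕ ↥A ≃ m := ((Equiv.subtypeEquivRight fun _ => Finset.mem_compl).sumCongr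
      (Equiv.refl _)).trans ((Equiv.sumComm _ _).trans (Equiv.sumCompl (· ∈ A)))
  have hblocks :
      (fromCols ((1 : Matrix m m R).submatrix id ((↑) : ↥Aᶜ → m)) M).submatrix e id =
        fromBlocks 1 (M.submatrix ((↑) : ↥Aᶜ → m) id) 0
          (M.submatrix ((↑) : ↥A → m) id) := by
    ext (i | i) (j | j)
    · exact congrFun (congrFun (submatrix_one _ Subtype.val_injective) i) j
    · rfl
    · have : (i : m) ≠ j := fun h => Finset.mem_compl.mp (h ▸ j.2) i.2
      simp [e, this]
    · rfl
  rw [← rank_submatrix _ e (Equiv.refl _), Equiv.coe_refl, hblocks,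
    rank_fromBlocks_zero₂₁_of_isUnit_det _ _ _ (by simp), Fintype.card_coe]

end Matrix

theorem rank_Fmat {F : Type*} [Field F] {W X : Type*} [Fintype W] [Fintype X] [DecidableEq W]
    (G : Matrix W W F) (Xb : Matrix W X F) (hG : IsUnit (1 - G)) (A : Finset W) (X' : Finset X) :
    (Fmat G Xb A X').rank = Aᶜ.card + (Tsub G Xb A X').rank := by
  have hdet : IsUnit (1 - G)⁻¹.det :=
    isUnit_nonsing_inv_det _ ((isUnit_iff_isUnit_det _).mp hG)
  have hnormal : -((1 - G)⁻¹ * Fmat G Xb A X')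
      = fromCols ((1 : Matrix W W F).submatrix id ((↑) : ↥Aᶜ → W))
          (-((1 - G)⁻¹ * Xb).submatrix id ((↑) : ↥X' → X)) := by
    have hleft : -((1 - G)⁻¹ * (G - 1)) = 1 := by
      rw [← neg_sub 1 G, Matrix.mul_neg, neg_neg,
        nonsing_inv_mul _ ((isUnit_iff_isUnit_det _).mp hG)]
    rw [Fmat, mul_fromCols, fromCols_neg]
    exact congrArg₂ fromCols (congrArg (submatrix · id _) hleft) rfl
  rw [← rank_mul_eq_right_of_isUnit_det _ _ hdet, ← rank_neg, hnormal,
    rank_fromCols_one_submatrix_compl, ← rank_neg (Tsub G Xb A X')]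
  rfl

theorem stmt4_general {F : Type*} [Field F] {W X : Type*} [Fintype W] [Fintype X]
    [DecidableEq W]
    (G : Matrix W W F) (Xb : Matrix W X F)
    (hG : IsUnit (1 - G))
    (Wj Wbj : Finset W) (Xj : Finset X) (hsub : Wbj ⊆ Wj) :
    ((Tsub G Xb Wbj Xj).rank = Wbj.card ↔
        (Fmat G Xb Wbj Xj).rank = Fintype.card W) ∧
    ((Tsub G Xb Wj Xj).rank
        = (Tsub G Xb Wbj Xj).rank + (Tsub G Xb (Wj \ Wbj) Xj).rank ↔
      ((Fmat G Xb Wj Xj).rank : ℤ)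
        = ((Fmat G Xb Wbj Xj).rank : ℤ) + ((Fmat G Xb (Wj \ Wbj) Xj).rank : ℤ)
          - (Fintype.card W : ℤ)) := by
  have hF := fun A => rank_Fmat G Xb hG A Xj
  have hcard := fun A : Finset W => Finset.card_compl_add_card A
  have hsplit := Finset.card_sdiff_add_card_eq_card hsub
  refine ⟨by rw [hF]; have := hcard Wbj; omega, ?_⟩
  rw [hF, hF, hF]
  have := hcard Wj; have := hcard Wbj; have := hcard (Wj \ Wbj)
  push_cast; omega

theorem stmt4 {F : Type*} [Field F] {W X : Type*} [Fintype W] [Fintype X]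
    [DecidableEq W] [DecidableEq X]
    (G : Matrix W W F) (Xb : Matrix W X F)
    (hG : IsUnit (1 - G))
    (Wj Wbj : Finset W) (Xj : Finset X) (hsub : Wbj ⊆ Wj) :
    ((Tsub G Xb Wbj Xj).rank = Wbj.card ↔
        (Fmat G Xb Wbj Xj).rank = Fintype.card W) ∧
    ((Tsub G Xb Wj Xj).rank
        = (Tsub G Xb Wbj Xj).rank + (Tsub G Xb (Wj \ Wbj) Xj).rank ↔
      ((Fmat G Xb Wj Xj).rank : ℤ)
        = ((Fmat G Xb Wbj Xj).rank : ℤ) + ((Fmat G Xb (Wj \ Wbj) Xj).rank : ℤ)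
          - (Fintype.card W : ℤ)) :=
  stmt4_general G Xb hG Wj Wbj Xj hsub
end

section
/- Let r be a directed graph on a vertex type V, let w_i ≠ w_j be vertices with r w_i w_j and ¬ r w_j w_j, and let N⁻(w_j) := { v | r v w_j }. Then there exists a path from w_i to some vertex of N⁻(w_j) ∖ {w_i} if and only if there exists a parallel path from w_i to w_j or there exists a loop through w_j that does not pass through w_i. -/
/-- A path in a directed graph `r`: a nonempty duplicate-free list of vertices
in which every pair of consecutive entries is related by `r`. -/
def IsPath {V : Type*} (r : V → V → Prop) (l : List V) : Prop :=
  l ≠ [] ∧ l.Nodup ∧ l.Chain' r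

/-- A path from the vertex set `V1` to the vertex set `V2`. -/
def IsPathFromTo {V : Type*} (r : V → V → Prop) (V1 V2 : Set V) (l : List V) : Prop :=
  IsPath r l ∧ ∀ h : l ≠ [], l.head h ∈ V1 ∧ l.getLast h ∈ V2

/-- A loop through `wj` with (nonempty) list `m` of intermediate vertices:
the list `wj :: m ++ [wj]` is a chain for `r`, and the vertices `wj :: m`
are pairwise distinct.  Its vertices are the entries of `wj :: m`. -/
def IsLoopThrough {V : Type*} (r : V → V → Prop) (wj : V) (m : List V) : Prop :=
  m ≠ [] ∧ (wj :: m).Nodup ∧ (wj :: (m ++ [wj])).Chain' r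

/-!
A path from `wi` ending at an in-neighbour `v ≠ wi` of `wj` either avoids `wj`, and then appending
`wj` yields a path to `wj` that is not the edge `[wi, wj]` because `v ≠ wi`; or it passes through
`wj`, and then its segment from `wj` to `v` closes up to a loop through `wj` avoiding `wi`, the
segment being nontrivial because `wj` carries no self-loop. Conversely, dropping the last vertex of
a parallel path, or prefixing a loop through `wj` with the edge `wi → wj`, gives such a path.
-/

theorem List.isChain_append_singleton_iff {α : Type*} {R : α → α → Prop} {l : List α}
    {a : α} (hl : l ≠ []) : (l ++ [a]).IsChain R ↔ l.IsChain R ∧ R (l.getLast hl) a := by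
  simp [List.isChain_append, List.getLast?_eq_some_getLast hl]

section Paths

variable {V : Type*} {r : V → V → Prop}

theorem isPath_iff {l : List V} : IsPath r l ↔ l ≠ [] ∧ l.Nodup ∧ l.IsChain r := Iff.rfl

theorem isPath_cons_cons_iff {a b : V} {l : List V} :
    IsPath r (a :: b :: l) ↔ a ∉ b :: l ∧ r a b ∧ IsPath r (b :: l) := by
  simp only [isPath_iff, ne_eq, reduceCtorEq, not_false_eq_true, true_and,
    List.nodup_cons (l := b :: l), List.isChain_cons_cons]
  tauto

theorem isPath_append_singleton_iff {l : List V} {a : V} (hl : l ≠ []) :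
    IsPath r (l ++ [a]) ↔ IsPath r l ∧ a ∉ l ∧ r (l.getLast hl) a := by
  have hnodup : (l ++ [a]).Nodup ↔ a ∉ l ∧ l.Nodup := by
    rw [← List.concat_eq_append, List.nodup_concat]
  simp only [isPath_iff, List.isChain_append_singleton_iff hl, hnodup, ne_eq,
    List.append_eq_nil_iff, List.cons_ne_nil, and_false, not_false_eq_true, hl, true_and]
  tauto

theorem IsPath.right_of_append {l₁ l₂ : List V} (h : IsPath r (l₁ ++ l₂))
    (h₂ : l₂ ≠ []) : IsPath r l₂ :=
  ⟨h₂, (List.nodup_append.mp h.2.1).2.1, h.2.2.right_of_append⟩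

theorem isLoopThrough_iff {w : V} {m : List V} :
    IsLoopThrough r w m ↔
      m ≠ [] ∧ IsPath r (w :: m) ∧ r ((w :: m).getLast (List.cons_ne_nil w m)) w := by
  change m ≠ [] ∧ (w :: m).Nodup ∧ ((w :: m) ++ [w]).IsChain r ↔ _
  rw [List.isChain_append_singleton_iff (List.cons_ne_nil w m), isPath_iff]
  simp only [ne_eq, reduceCtorEq, not_false_eq_true, true_and, and_assoc]

theorem isPathFromTo_singleton_iff {u : V} {T : Set V} {l : List V} :
    IsPathFromTo r {u} T l ↔
      ∃ t, l = u :: t ∧ IsPath r (u :: t) ∧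
        (u :: t).getLast (List.cons_ne_nil u t) ∈ T := by
  constructor
  · rintro ⟨hp, hends⟩
    obtain ⟨a, t, rfl⟩ := List.exists_cons_of_ne_nil hp.1
    obtain ⟨rfl, hT⟩ := hends (List.cons_ne_nil a t)
    exact ⟨t, rfl, hp, hT⟩
  · rintro ⟨t, rfl, hp, hT⟩
    exact ⟨hp, fun _ => ⟨rfl, hT⟩⟩

theorem isPathFromTo_append_singleton {u w : V} {t : List V} (hp : IsPath r (u :: t))
    (hw : w ∉ u :: t) (hlast : r ((u :: t).getLast (List.cons_ne_nil u t)) w) :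
    IsPathFromTo r {u} {w} (u :: t ++ [w]) :=
  isPathFromTo_singleton_iff.mpr
    ⟨t ++ [w], rfl, (isPath_append_singleton_iff (List.cons_ne_nil u t)).mpr ⟨hp, hw, hlast⟩,
      by simp⟩

theorem exists_isLoopThrough_of_mem {u w : V} {t : List V} (hp : IsPath r (u :: t)) (hw : w ∈ t)
    (hlast : r ((u :: t).getLast (List.cons_ne_nil u t)) w) (hww : ¬ r w w) :
    ∃ m, IsLoopThrough r w m ∧ u ∉ w :: m := by
  obtain ⟨s, m, rfl⟩ := List.append_of_mem hw
  have hsplit : u :: (s ++ w :: m) = (u :: s) ++ (w :: m) := rfl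
  have hlast_eq : (u :: (s ++ w :: m)).getLast (List.cons_ne_nil _ _) =
      (w :: m).getLast (List.cons_ne_nil w m) := by
    simp only [hsplit, List.getLast_append_of_ne_nil _ (List.cons_ne_nil w m)]
  rw [hlast_eq] at hlast
  have hm : m ≠ [] := by
    rintro rfl
    exact hww hlast
  rw [hsplit] at hp
  exact ⟨m, isLoopThrough_iff.mpr ⟨hm, hp.right_of_append (List.cons_ne_nil w m), hlast⟩,
    List.disjoint_of_nodup_append hp.2.1 List.mem_cons_self⟩

theorem exists_isPath_of_isPathFromTo_ne_pair {u w : V} {l : List V} (huw : u ≠ w)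
    (hl : IsPathFromTo r {u} {w} l) (hpair : l ≠ [u, w]) :
    ∃ t, IsPath r (u :: t) ∧ r ((u :: t).getLast (List.cons_ne_nil u t)) w ∧
      (u :: t).getLast (List.cons_ne_nil u t) ≠ u := by
  obtain ⟨t, rfl, hp, hlast⟩ := isPathFromTo_singleton_iff.mp hl
  obtain rfl | ⟨s, v, rfl⟩ := List.eq_nil_or_concat' t
  · exact absurd hlast huw
  obtain rfl : v = w := by simpa using hlast
  obtain ⟨hp, -, hlast⟩ := (isPath_append_singleton_iff (List.cons_ne_nil u s)).mp hp
  have hs : s ≠ [] := by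
    rintro rfl
    exact hpair rfl
  refine ⟨s, hp, hlast, ?_⟩
  rw [List.getLast_cons hs]
  rintro h
  exact (List.nodup_cons.mp hp.2.1).1 (h ▸ List.getLast_mem hs)

theorem isPath_cons_of_isLoopThrough {u w : V} {m : List V} (huw : r u w)
    (hloop : IsLoopThrough r w m) (hu : u ∉ w :: m) :
    IsPath r (u :: w :: m) ∧ r ((u :: w :: m).getLast (List.cons_ne_nil _ _)) w ∧
      (u :: w :: m).getLast (List.cons_ne_nil _ _) ≠ u := by
  obtain ⟨-, hp, hlast⟩ := isLoopThrough_iff.mp hloop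
  rw [List.getLast_cons (List.cons_ne_nil w m)]
  refine ⟨isPath_cons_cons_iff.mpr ⟨hu, huw, hp⟩, hlast, ?_⟩
  rintro h
  exact hu (h ▸ List.getLast_mem _)

end Paths

theorem stmt12 {V : Type*} (r : V → V → Prop) (wi wj : V)
    (hne : wi ≠ wj) (hedge : r wi wj) (hnoself : ¬ r wj wj) :
    (∃ l : List V, IsPathFromTo r {wi} ({v | r v wj} \ {wi}) l) ↔
      ((∃ l : List V, IsPathFromTo r {wi} {wj} l ∧ l ≠ [wi, wj]) ∨
       (∃ m : List V, IsLoopThrough r wj m ∧ wi ∉ wj :: m)) := by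
  constructor
  · rintro ⟨l, hl⟩
    obtain ⟨t, rfl, hp, hlast, hlast_ne⟩ := isPathFromTo_singleton_iff.mp hl
    by_cases hw : wj ∈ t
    · exact .inr (exists_isLoopThrough_of_mem hp hw hlast hnoself)
    · refine .inl ⟨_, isPathFromTo_append_singleton hp ?_ hlast, ?_⟩
      · simp [hne.symm, hw]
      · intro h
        obtain rfl : t = [] := by simpa using h
        exact hlast_ne rfl
  · rintro (⟨l, hl, hpair⟩ | ⟨m, hloop, hwi⟩)
    · obtain ⟨t, hp, hlast, hlast_ne⟩ := exists_isPath_of_isPathFromTo_ne_pair hne hl hpair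
      exact ⟨_, isPathFromTo_singleton_iff.mpr ⟨t, rfl, hp, hlast, hlast_ne⟩⟩
    · obtain ⟨hp, hlast, hlast_ne⟩ := isPath_cons_of_isLoopThrough hedge hloop hwi
      exact ⟨_, isPathFromTo_singleton_iff.mpr ⟨wj :: m, rfl, hp, hlast, hlast_ne⟩⟩
end

section
/- Let r be a directed graph on a vertex type V, let W̄, X̄, V2 be vertex sets with W̄ disjoint from V2, and let N⁺(W̄) := { v | ∃ w ∈ W̄, r w v }. Then for every vertex set D with D ∩ W̄ = ∅: D is a (N⁺(W̄) ∪ X̄)–V2 disconnecting set if and only if D is a (W̄ ∪ X̄)–V2 disconnecting set. -/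
/-- `D` is a `V1`–`V2` disconnecting set: every path from `V1` to `V2`
contains a vertex of `D`. -/
def Disconnects {V : Type*} (r : V → V → Prop) (V1 V2 D : Set V) : Prop :=
  ∀ l : List V, IsPathFromTo r V1 V2 l → ∃ v ∈ D, v ∈ l

section

variable {V : Type*} {r : V → V → Prop}

def outNeighbors (r : V → V → Prop) (W : Set V) : Set V := {v | ∃ w ∈ W, r w v}

theorem IsPath.of_suffix {l l' : List V} (hl : IsPath r l) (hsuf : l' <:+ l) (hne : l' ≠ []) :
    IsPath r l' :=
  ⟨hne, hl.2.1.sublist hsuf.sublist, hl.2.2.suffix hsuf⟩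

theorem IsPath.cons {a : V} {l : List V} (hl : IsPath r l) (ha : a ∉ l)
    (hr : r a (l.head hl.1)) : IsPath r (a :: l) := by
  obtain ⟨b, t, rfl⟩ := List.exists_cons_of_ne_nil hl.1
  exact ⟨List.cons_ne_nil a _, List.nodup_cons.mpr ⟨ha, hl.2.1⟩,
    List.isChain_cons_cons.mpr ⟨hr, hl.2.2⟩⟩

theorem isPathFromTo_cons {V1 V2 : Set V} {a : V} {l : List V} :
    IsPathFromTo r V1 V2 (a :: l) ↔
      IsPath r (a :: l) ∧ a ∈ V1 ∧ (a :: l).getLast (List.cons_ne_nil a l) ∈ V2 :=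
  ⟨fun h => ⟨h.1, h.2 _⟩, fun h => ⟨h.1, fun _ => h.2⟩⟩

theorem disconnects_union_left_iff {V1 V1' V2 D : Set V} :
    Disconnects r (V1 ∪ V1') V2 D ↔ Disconnects r V1 V2 D ∧ Disconnects r V1' V2 D := by
  refine ⟨fun h => ⟨fun l hl => h l ?_, fun l hl => h l ?_⟩, fun h l hl => ?_⟩
  · exact ⟨hl.1, fun hne => ⟨Or.inl (hl.2 hne).1, (hl.2 hne).2⟩⟩
  · exact ⟨hl.1, fun hne => ⟨Or.inr (hl.2 hne).1, (hl.2 hne).2⟩⟩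
  · obtain ⟨hl₁ | hl₁', hl₂⟩ := hl.2 hl.1.1
    · exact h.1 l ⟨hl.1, fun _ => ⟨hl₁, hl₂⟩⟩
    · exact h.2 l ⟨hl.1, fun _ => ⟨hl₁', hl₂⟩⟩

theorem Disconnects.of_outNeighbors {W V2 D : Set V} (hWV2 : Disjoint W V2)
    (hD : Disconnects r (outNeighbors r W) V2 D) : Disconnects r W V2 D := by
  rintro (_ | ⟨a, _ | ⟨b, t⟩⟩) hl
  · exact absurd rfl hl.1.1
  · obtain ⟨-, ha, haV2⟩ := isPathFromTo_cons.mp hl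
    exact absurd haV2 (hWV2.notMem_of_mem_left ha)
  obtain ⟨hpath, ha, hlast⟩ := isPathFromTo_cons.mp hl
  have hab : r a b := (List.isChain_cons_cons.mp hpath.2.2).1
  obtain ⟨v, hvD, hv⟩ := hD (b :: t) <| isPathFromTo_cons.mpr
    ⟨hpath.of_suffix (List.suffix_cons a _) (List.cons_ne_nil b t), ⟨a, ha, hab⟩,
      by rwa [List.getLast_cons] at hlast⟩
  exact ⟨v, hvD, List.mem_cons_of_mem a hv⟩

theorem Disconnects.outNeighbors {W V2 D : Set V} (hDW : Disjoint D W)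
    (hD : Disconnects r W V2 D) : Disconnects r (outNeighbors r W) V2 D := by
  intro l ⟨hpath, hends⟩
  obtain ⟨⟨w, hw, hwu⟩, hlast⟩ := hends hpath.1
  by_cases hwl : w ∈ l
  · obtain ⟨s, t, rfl⟩ := List.append_of_mem hwl
    obtain ⟨v, hvD, hv⟩ := hD (w :: t) <| isPathFromTo_cons.mpr
      ⟨hpath.of_suffix (List.suffix_append s _) (List.cons_ne_nil w t), hw,
        by rwa [List.getLast_append] at hlast⟩
    exact ⟨v, hvD, List.mem_append_right s hv⟩
  · obtain ⟨v, hvD, hv⟩ := hD (w :: l) <| isPathFromTo_cons.mpr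
      ⟨hpath.cons hwl hwu, hw, by rwa [List.getLast_cons hpath.1]⟩
    rcases List.mem_cons.mp hv with rfl | hv
    · exact absurd hw (hDW.notMem_of_mem_left hvD)
    · exact ⟨v, hvD, hv⟩

end

theorem stmt14 {V : Type*} (r : V → V → Prop) (Wb Xb V2 : Set V)
    (hWV2 : Disjoint Wb V2) (D : Set V) (hDW : D ∩ Wb = ∅) :
    Disconnects r ({v | ∃ w ∈ Wb, r w v} ∪ Xb) V2 D ↔
      Disconnects r (Wb ∪ Xb) V2 D := by
  have hDW' : Disjoint D Wb := Set.disjoint_iff_inter_eq_empty.mpr hDW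
  rw [disconnects_union_left_iff, disconnects_union_left_iff]
  exact ⟨fun h => ⟨h.1.of_outNeighbors hWV2, h.2⟩, fun h => ⟨h.1.outNeighbors hDW', h.2⟩⟩
end
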